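/- The finite partition {C_i}_{i∈I} is uniform (μ[C_i] = μ[C_j] for all i, j) if and only if the stochastic matrix W with entries W_{i,j} = μ[φ^{-1}(C_j) ∩ C_i]/μ[C_i] is doubly stochastic, assuming φ is mixing with respect to the finite invariant measure μ. -/

import Mathlib

/-!
Write `m i = μ (C i)`. Since `φ` preserves `μ`, `m` is a left fixed vector of the transition
matrix: `∑ i, m i * W i j = m j`. For uniform `m` this identity is exactly the column-sum
condition. Conversely, if the columns of `W` sum to `1`, then for a cell `j` of minimal measure
the identity writes `m j` as a convex combination of the `m i`, so `W i j = 0` unless `C i` is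
minimal too. Hence the union `U` of the minimal cells satisfies `φ⁻¹ U ⊆ U` up to a null set.
Mixing implies ergodicity, so `U` is conull, and every cell, having positive measure, is minimal.
-/

open MeasureTheory Filter Set Topology

section Partition

variable {X I : Type*} [MeasurableSpace X] {μ : Measure X} {C : I → Set X}

theorem sum_measureReal_inter_of_partition [Fintype I] [IsFiniteMeasure μ]
    (hmeas : ∀ i, MeasurableSet (C i)) (hdisj : Pairwise (Function.onFun Disjoint C))
    (hcover : ⋃ i, C i = univ) {s : Set X} (hs : MeasurableSet s) :
    ∑ i, μ.real (s ∩ C i) = μ.real s := by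
  rw [← measureReal_iUnion_fintype (fun i j hij => (hdisj hij).mono inter_subset_right
    inter_subset_right) fun i => hs.inter (hmeas i), ← inter_iUnion, hcover, inter_univ]

theorem ae_le_biUnion_of_measure_inter_eq_zero [Countable I] (hcover : ⋃ i, C i = univ)
    {S : Set I} {T : Set X} (hT : ∀ i ∉ S, μ (T ∩ C i) = 0) : T ≤ᵐ[μ] ⋃ k ∈ S, C k := by
  refine ae_le_set.2 (measure_mono_null ?_ (measure_iUnion_null fun i =>
    measure_iUnion_null (hT i)))
  rintro x ⟨hxT, hxU⟩
  obtain ⟨i, hxi⟩ := mem_iUnion.1 (hcover.symm ▸ mem_univ x : x ∈ ⋃ i, C i)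
  exact mem_iUnion₂.2 ⟨i, fun hi => hxU (mem_biUnion hi hxi), hxT, hxi⟩

theorem mem_of_biUnion_ae_eq_univ (hdisj : Pairwise (Function.onFun Disjoint C)) {S : Set I}
    (hS : ⋃ k ∈ S, C k =ᵐ[μ] univ) {i : I} (hi : μ (C i) ≠ 0) : i ∈ S := by
  by_contra hiS
  refine hi (measure_mono_null ?_ (ae_eq_univ.1 hS))
  intro x hxi hxU
  obtain ⟨k, hk, hxk⟩ := mem_iUnion₂.1 hxU
  exact hdisj (ne_of_mem_of_not_mem hk hiS) |>.le_bot ⟨hxk, hxi⟩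

end Partition

theorem eq_zero_of_sum_mul_eq_of_forall_le {ι : Type*} [Fintype ι] {w m : ι → ℝ} {c : ℝ}
    (hw : ∀ k, 0 ≤ w k) (hc : ∀ k, c ≤ m k) (hsum : ∑ k, w k = 1)
    (hmean : ∑ k, m k * w k = c) {k : ι} (hk : c < m k) : w k = 0 := by
  have hzero : ∑ k, (m k - c) * w k = 0 := by
    simp only [sub_mul, Finset.sum_sub_distrib, ← Finset.mul_sum, hsum, hmean, mul_one, sub_self]
  have := (Finset.sum_eq_zero_iff_of_nonneg fun k _ =>
    mul_nonneg (sub_nonneg.2 (hc k)) (hw k)).1 hzero k (Finset.mem_univ k)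
  exact (mul_eq_zero.1 this).resolve_left (sub_pos.2 hk).ne'

theorem ergodic_of_tendsto_measure_preimage_inter_self {X : Type*} [MeasurableSpace X]
    {μ : Measure X} [IsFiniteMeasure μ] {φ : X → X} (hφ : MeasurePreserving φ μ μ)
    (hmix : ∀ s, MeasurableSet s → Tendsto (fun n => μ.real (φ^[n] ⁻¹' s ∩ s)) atTop
      (𝓝 (μ.real s / μ.real univ * μ.real s))) :
    Ergodic φ μ := by
  refine ⟨hφ, ⟨fun s hs hφs => eventuallyConst_set'.2 ?_⟩⟩
  have hconst : ∀ n, μ.real (φ^[n] ⁻¹' s ∩ s) = μ.real s := fun n => by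
    rw [(Function.IsFixedPt.preimage_iterate hφs n).eq, inter_self]
  have hfix : μ.real s = μ.real s / μ.real univ * μ.real s :=
    tendsto_nhds_unique (by simp only [hconst, tendsto_const_nhds]) (hmix s hs)
  rcases eq_or_ne (μ.real s) 0 with h0 | h0
  · exact Or.inl (ae_eq_empty.2 ((measureReal_eq_zero_iff).1 h0))
  · have hfull : μ.real s = μ.real univ := by
      have huniv : μ.real univ ≠ 0 := by
        intro h; rw [h, div_zero, zero_mul] at hfix; exact h0 hfix
      field_simp at hfix; linarith
    refine Or.inr (ae_eq_univ.2 ((measureReal_eq_zero_iff).1 ?_))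
    rw [measureReal_compl hs, hfull, sub_self]

section CellTransition

variable {X I : Type*} [MeasurableSpace X] {μ : Measure X} {φ : X → X} {C : I → Set X}

noncomputable def cellTransition (μ : Measure X) (φ : X → X) (C : I → Set X) (i j : I) : ℝ :=
  μ.real (φ ⁻¹' C j ∩ C i) / μ.real (C i)

theorem cellTransition_nonneg (i j : I) : 0 ≤ cellTransition μ φ C i j := by
  unfold cellTransition; positivity

variable [IsFiniteMeasure μ]

theorem measureReal_mul_cellTransition {i : I} (hC : μ (C i) ≠ 0) (j : I) :
    μ.real (C i) * cellTransition μ φ C i j = μ.real (φ ⁻¹' C j ∩ C i) :=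
  mul_div_cancel₀ _ ((measureReal_ne_zero_iff).2 hC)

variable [Fintype I]

theorem sum_cellTransition_right (hmeas : ∀ i, MeasurableSet (C i))
    (hdisj : Pairwise (Function.onFun Disjoint C)) (hcover : ⋃ i, C i = univ)
    (hφ : Measurable φ) {i : I} (hC : μ (C i) ≠ 0) :
    ∑ j, cellTransition μ φ C i j = 1 := by
  have hrow : ∑ j, μ.real (C i ∩ φ ⁻¹' C j) = μ.real (C i) :=
    sum_measureReal_inter_of_partition (fun j => hφ (hmeas j))
      (fun j k hjk => (hdisj hjk).preimage φ) (by rw [← preimage_iUnion, hcover, preimage_univ])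
      (hmeas i)
  simp only [cellTransition, ← Finset.sum_div, inter_comm (φ ⁻¹' _), hrow]
  exact div_self ((measureReal_ne_zero_iff).2 hC)

theorem sum_measureReal_mul_cellTransition (hmeas : ∀ i, MeasurableSet (C i))
    (hdisj : Pairwise (Function.onFun Disjoint C)) (hcover : ⋃ i, C i = univ)
    (hφ : MeasurePreserving φ μ μ) (hC : ∀ i, μ (C i) ≠ 0) (j : I) :
    ∑ i, μ.real (C i) * cellTransition μ φ C i j = μ.real (C j) := by
  simp only [measureReal_mul_cellTransition (hC _)]
  rw [sum_measureReal_inter_of_partition hmeas hdisj hcover (hφ.measurable (hmeas j)),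
    measureReal_def, hφ.measure_preimage (hmeas j).nullMeasurableSet, measureReal_def]

theorem sum_cellTransition_left_of_measure_eq (hmeas : ∀ i, MeasurableSet (C i))
    (hdisj : Pairwise (Function.onFun Disjoint C)) (hcover : ⋃ i, C i = univ)
    (hφ : MeasurePreserving φ μ μ) (hC : ∀ i, μ (C i) ≠ 0) (huni : ∀ i j, μ (C i) = μ (C j))
    (j : I) : ∑ i, cellTransition μ φ C i j = 1 := by
  have hmj : μ.real (C j) ≠ 0 := (measureReal_ne_zero_iff).2 (hC j)
  have := sum_measureReal_mul_cellTransition hmeas hdisj hcover hφ hC j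
  simp only [measureReal_def, huni _ j, ← Finset.mul_sum] at this hmj
  exact (mul_eq_left₀ hmj).1 this

theorem measure_inter_eq_zero_of_sum_cellTransition_left (hmeas : ∀ i, MeasurableSet (C i))
    (hdisj : Pairwise (Function.onFun Disjoint C)) (hcover : ⋃ i, C i = univ)
    (hφ : MeasurePreserving φ μ μ) (hC : ∀ i, μ (C i) ≠ 0)
    (hcol : ∀ j, ∑ i, cellTransition μ φ C i j = 1) {j : I}
    (hj : ∀ k, μ.real (C j) ≤ μ.real (C k)) {i : I} (hi : μ.real (C j) < μ.real (C i)) :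
    μ (φ ⁻¹' C j ∩ C i) = 0 := by
  have hW : cellTransition μ φ C i j = 0 :=
    eq_zero_of_sum_mul_eq_of_forall_le (fun k => cellTransition_nonneg k j) hj (hcol j)
      (sum_measureReal_mul_cellTransition hmeas hdisj hcover hφ hC j) hi
  have h := measureReal_mul_cellTransition (φ := φ) (hC i) j
  rw [hW, mul_zero] at h
  exact (measureReal_eq_zero_iff).1 h.symm

theorem measure_eq_of_sum_cellTransition_left (hmeas : ∀ i, MeasurableSet (C i))
    (hdisj : Pairwise (Function.onFun Disjoint C)) (hcover : ⋃ i, C i = univ)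
    (hφ : Ergodic φ μ) (hC : ∀ i, μ (C i) ≠ 0)
    (hcol : ∀ j, ∑ i, cellTransition μ φ C i j = 1) (i j : I) : μ (C i) = μ (C j) := by
  obtain ⟨i₀, -, hi₀⟩ :=
    Finset.exists_min_image Finset.univ (fun k => μ.real (C k)) ⟨i, Finset.mem_univ i⟩
  set S : Set I := {k | μ.real (C k) = μ.real (C i₀)}
  set U : Set X := ⋃ k ∈ S, C k
  have hinv : φ ⁻¹' U ≤ᵐ[μ] U := by
    refine ae_le_biUnion_of_measure_inter_eq_zero hcover fun k hk => ?_
    simp only [U, preimage_iUnion₂, iUnion₂_inter]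
    refine measure_biUnion_null_iff (to_countable S) |>.2 fun l hl => ?_
    have hl : μ.real (C l) = μ.real (C i₀) := hl
    refine measure_inter_eq_zero_of_sum_cellTransition_left hmeas hdisj hcover
      hφ.toMeasurePreserving hC hcol (fun k => hl ▸ hi₀ k (Finset.mem_univ k)) ?_
    exact hl ▸ (hi₀ k (Finset.mem_univ k)).lt_of_ne (Ne.symm hk)
  have hU : U =ᵐ[μ] univ := by
    refine (hφ.ae_empty_or_univ_of_preimage_ae_le' ?_ hinv (measure_ne_top μ U)).resolve_left ?_
    · exact (MeasurableSet.biUnion (to_countable S) fun k _ => hmeas k).nullMeasurableSet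
    · exact fun h => hC i₀ (measure_mono_null
        (subset_biUnion_of_mem (u := C) (show i₀ ∈ S from rfl)) (ae_eq_empty.1 h))
  have hS : ∀ k, μ (C k) = μ (C i₀) := fun k =>
    (ENNReal.toReal_eq_toReal_iff' (measure_ne_top _ _) (measure_ne_top _ _)).1
      (mem_of_biUnion_ae_eq_univ hdisj hU (hC k))
  rw [hS i, hS j]

end CellTransition

/-- The finite partition {C_i} is uniform (all cells of equal measure) if and only if
the stochastic matrix W_{i,j} = μ[φ^{-1}(C_j) ∩ C_i]/μ[C_i] is doubly stochastic,
for φ mixing with respect to the finite invariant measure μ. -/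
theorem uniform_partition_iff_doubly_stochastic
    {X : Type*} [MeasurableSpace X] {I : Type*} [Fintype I]
    (μ : Measure X) [IsFiniteMeasure μ]
    (φ : X → X) (hφ : MeasurePreserving φ μ μ)
    (hmix : ∀ A B : Set X, MeasurableSet A → MeasurableSet B →
      Tendsto (fun n => (μ (φ^[n] ⁻¹' A ∩ B)).toReal) atTop
        (𝓝 ((μ A).toReal / (μ Set.univ).toReal * (μ B).toReal)))
    (C : I → Set X) (hmeas : ∀ i, MeasurableSet (C i))
    (hdisj : Pairwise (Function.onFun Disjoint C)) (hcover : ⋃ i, C i = Set.univ)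
    (hpos : ∀ i, 0 < μ (C i))
    (W : I → I → ℝ)
    (hW : ∀ i j, W i j = (μ (φ ⁻¹' (C j) ∩ C i)).toReal / (μ (C i)).toReal) :
    (∀ i j, μ (C i) = μ (C j)) ↔
      ((∀ i j, 0 ≤ W i j) ∧ (∀ i, ∑ j, W i j = 1) ∧ (∀ j, ∑ i, W i j = 1)) := by
  have hC : ∀ i, μ (C i) ≠ 0 := fun i => (hpos i).ne'
  obtain rfl : W = cellTransition μ φ C := funext₂ hW
  refine ⟨fun huni => ⟨cellTransition_nonneg, ?_, ?_⟩, fun ⟨_, _, hcol⟩ => ?_⟩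
  · exact fun i => sum_cellTransition_right hmeas hdisj hcover hφ.measurable (hC i)
  · exact sum_cellTransition_left_of_measure_eq hmeas hdisj hcover hφ hC huni
  · have hergodic : Ergodic φ μ :=
      ergodic_of_tendsto_measure_preimage_inter_self hφ fun s hs => hmix s s hs hs
    exact measure_eq_of_sum_cellTransition_left hmeas hdisj hcover hergodic hC hcol
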